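/- Let G be a {K_5, K_4 − e}-free graph that is minimally non contact-B0-VPG (G is not contact B0-VPG but every proper induced subgraph of G is). Then every simplicial vertex of G has degree exactly three. -/

import Mathlib

/-- An axis-parallel nontrivial segment on the grid: `horiz` tells its direction,
`coord` is the fixed coordinate (the `y`-coordinate if horizontal, the `x`-coordinate
if vertical) and `[lo, hi]` (with `lo < hi`, i.e. the segment is nontrivial) is the
interval spanned by the varying coordinate. -/
structure GridSeg where
  horiz : Bool
  coord : ℤ
  lo : ℤ
  hi : ℤ
  lt : lo < hi

namespace GridSeg

/-- The set of points (in the real plane) of a grid segment. -/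
def pts (s : GridSeg) : Set (ℝ × ℝ) :=
  if s.horiz then {p | p.2 = (s.coord : ℝ) ∧ (s.lo : ℝ) ≤ p.1 ∧ p.1 ≤ (s.hi : ℝ)}
  else {p | p.1 = (s.coord : ℝ) ∧ (s.lo : ℝ) ≤ p.2 ∧ p.2 ≤ (s.hi : ℝ)}

/-- The interior of a grid segment. -/
def interior (s : GridSeg) : Set (ℝ × ℝ) :=
  if s.horiz then {p | p.2 = (s.coord : ℝ) ∧ (s.lo : ℝ) < p.1 ∧ p.1 < (s.hi : ℝ)}
  else {p | p.1 = (s.coord : ℝ) ∧ (s.lo : ℝ) < p.2 ∧ p.2 < (s.hi : ℝ)}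

/-- The two endpoints of a grid segment. -/
def ends (s : GridSeg) : Set (ℝ × ℝ) :=
  if s.horiz then {((s.lo : ℝ), (s.coord : ℝ)), ((s.hi : ℝ), (s.coord : ℝ))}
  else {((s.coord : ℝ), (s.lo : ℝ)), ((s.coord : ℝ), (s.hi : ℝ))}

/-- Two segments touch if they share a point which is an endpoint of at least
one of the two segments. -/
def Touch (s t : GridSeg) : Prop :=
  ∃ p : ℝ × ℝ, p ∈ s.pts ∧ p ∈ t.pts ∧ (p ∈ s.ends ∨ p ∈ t.ends)

end GridSeg

/-- `f` is a contact B₀-VPG representation of `G`: the segments of distinct vertices are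
interiorly disjoint, and two distinct vertices are adjacent iff their segments touch. -/
def IsB0Rep {V : Type*} (G : SimpleGraph V) (f : V → GridSeg) : Prop :=
  (∀ v w : V, v ≠ w → Disjoint (GridSeg.interior (f v)) (GridSeg.interior (f w))) ∧
  (∀ v w : V, v ≠ w → (G.Adj v w ↔ GridSeg.Touch (f v) (f w)))

/-- A graph is contact B₀-VPG if it admits a contact B₀-VPG representation. -/
def ContactB0VPG {V : Type*} (G : SimpleGraph V) : Prop :=
  ∃ f : V → GridSeg, IsB0Rep G f

/-- The diamond `K₄ − e`: the complete graph on four vertices minus the edge `{2, 3}`. -/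
def diamond : SimpleGraph (Fin 4) where
  Adj a b := a ≠ b ∧ ¬(a = 2 ∧ b = 3) ∧ ¬(a = 3 ∧ b = 2)
  symm := by
    constructor
    rintro a b ⟨h1, h2, h3⟩
    exact ⟨h1.symm, fun ⟨x, y⟩ => h3 ⟨y, x⟩, fun ⟨x, y⟩ => h2 ⟨y, x⟩⟩
  loopless := by
    constructor
    rintro a ⟨h, -, -⟩
    exact h rfl

/-!
A simplicial vertex `v` forms a clique with its neighbours, so `K₅`-freeness bounds its degree by
three. If the degree were at most two, a representation of `G - v` would extend to one of `G`,
against minimality. An isolated `v` is drawn far away. Otherwise double all coordinates: a vertical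
unit segment starting on an even row then meets only the segments through its starting point `q`
(and symmetrically for horizontal ones), so it can represent `v` once the segments through `q` are
exactly those of the neighbours and its interior avoids theirs. For one neighbour `a`, take `q` at
an odd abscissa inside the segment of `a`: any other segment through `q` would overlap it. For two
neighbours, which are adjacent, take `q` where their segments touch: a third segment through `q`
would give a vertex adjacent to both of them but not to `v`, hence a diamond. Each of the two
segments blocks at most two of the four unit rays at `q`, and one of them ends at `q`, so some
ray is free.
-/

namespace GridSeg

def latticePt (m n : ℤ) : ℝ × ℝ := ((m : ℝ), (n : ℝ))

variable {s t r : GridSeg} {p : ℝ × ℝ} {m n : ℤ}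

lemma ends_subset_pts (s : GridSeg) : s.ends ⊆ s.pts := by
  have hlt : (s.lo : ℝ) ≤ s.hi := by exact_mod_cast s.lt.le
  intro p hp
  unfold ends at hp
  unfold pts
  split_ifs at hp ⊢ <;> rcases hp with rfl | rfl <;> simp [hlt]

lemma interior_subset_pts (s : GridSeg) : s.interior ⊆ s.pts := by
  intro p hp
  unfold interior at hp
  unfold pts
  split_ifs at hp ⊢ <;> exact ⟨hp.1, hp.2.1.le, hp.2.2.le⟩

lemma mem_interior_of_mem_pts_of_notMem_ends (hp : p ∈ s.pts) (hp' : p ∉ s.ends) :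
    p ∈ s.interior := by
  unfold pts at hp
  unfold ends at hp'
  unfold interior
  split_ifs at hp hp' ⊢ <;> obtain ⟨h, hlo, hhi⟩ := hp <;>
    simp only [Set.mem_insert_iff, Set.mem_singleton_iff, Prod.ext_iff, not_or] at hp'
  · exact ⟨h, hlo.lt_of_ne fun e => hp'.1 ⟨e.symm, h⟩, hhi.lt_of_ne fun e => hp'.2 ⟨e, h⟩⟩
  · exact ⟨h, hlo.lt_of_ne fun e => hp'.1 ⟨h, e.symm⟩, hhi.lt_of_ne fun e => hp'.2 ⟨h, e⟩⟩

lemma touch_comm : s.Touch t ↔ t.Touch s :=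
  ⟨fun ⟨p, hs, ht, he⟩ => ⟨p, ht, hs, he.symm⟩, fun ⟨p, ht, hs, he⟩ => ⟨p, hs, ht, he.symm⟩⟩

lemma touch_of_mem_pts (hd : Disjoint s.interior t.interior) (hs : p ∈ s.pts)
    (ht : p ∈ t.pts) : s.Touch t := by
  by_contra h
  have hs' : p ∉ s.ends := fun he => h ⟨p, hs, ht, .inl he⟩
  have ht' : p ∉ t.ends := fun he => h ⟨p, hs, ht, .inr he⟩
  exact Set.disjoint_left.1 hd (mem_interior_of_mem_pts_of_notMem_ends hs hs')
    (mem_interior_of_mem_pts_of_notMem_ends ht ht')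

@[simp]
lemma latticePt_mem_pts :
    latticePt m n ∈ s.pts ↔ if s.horiz then n = s.coord ∧ s.lo ≤ m ∧ m ≤ s.hi
      else m = s.coord ∧ s.lo ≤ n ∧ n ≤ s.hi := by
  unfold pts latticePt
  split_ifs <;> simp only [Set.mem_ofPred_eq] <;> norm_cast

@[simp]
lemma latticePt_mem_ends :
    latticePt m n ∈ s.ends ↔ if s.horiz then n = s.coord ∧ (m = s.lo ∨ m = s.hi)
      else m = s.coord ∧ (n = s.lo ∨ n = s.hi) := by
  unfold ends latticePt
  split_ifs <;> simp only [Set.mem_insert_iff, Set.mem_singleton_iff, Prod.ext_iff] <;>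
    norm_cast <;> tauto

lemma exists_latticePt_eq_of_mem_ends (h : p ∈ s.ends) : ∃ m n, latticePt m n = p := by
  unfold ends at h
  split_ifs at h <;> rcases h with rfl | rfl <;> exact ⟨_, _, rfl⟩

lemma disjoint_interior_of_horiz_ne (h : s.horiz ≠ t.horiz)
    (hc : t.coord ≤ s.lo ∨ s.hi ≤ t.coord) : Disjoint s.interior t.interior := by
  refine Set.disjoint_left.2 fun p hs ht => ?_
  have hc' : (t.coord : ℝ) ≤ s.lo ∨ (s.hi : ℝ) ≤ t.coord := by exact_mod_cast hc
  cases hsh : s.horiz <;> cases hth : t.horiz <;> simp [interior, hsh, hth] at h hs ht <;>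
    rcases hc' with hc' | hc' <;> linarith [hs.2.1, hs.2.2, ht.1]

lemma disjoint_interior_of_horiz_eq (h : s.horiz = t.horiz)
    (hc : s.hi ≤ t.lo ∨ t.hi ≤ s.lo) : Disjoint s.interior t.interior := by
  refine Set.disjoint_left.2 fun p hs ht => ?_
  have hc' : (s.hi : ℝ) ≤ t.lo ∨ (t.hi : ℝ) ≤ s.lo := by exact_mod_cast hc
  cases hsh : s.horiz <;> cases hth : t.horiz <;> simp [interior, hsh, hth] at h hs ht <;>
    rcases hc' with hc' | hc' <;> linarith [hs.2.1, hs.2.2, ht.2.1, ht.2.2]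

lemma exists_disjoint_pts {ι : Type*} [Finite ι] (f : ι → GridSeg) :
    ∃ r : GridSeg, ∀ i, Disjoint r.pts (f i).pts := by
  obtain ⟨M, hM⟩ := (Set.finite_range fun i => max (f i).coord (f i).hi).bddAbove
  refine ⟨⟨true, M + 1, 0, 1, one_pos⟩, fun i => Set.disjoint_left.2 fun p hr hi => ?_⟩
  have hc : ((f i).coord : ℝ) ≤ M := by exact_mod_cast (le_max_left _ _).trans (hM ⟨i, rfl⟩)
  have hh : ((f i).hi : ℝ) ≤ M := by exact_mod_cast (le_max_right _ _).trans (hM ⟨i, rfl⟩)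
  simp only [pts, if_true, Set.mem_ofPred_eq] at hr
  push_cast at hr
  unfold pts at hi
  split_ifs at hi <;> linarith [hi.1, hi.2.2]

def transpose (s : GridSeg) : GridSeg := ⟨!s.horiz, s.coord, s.lo, s.hi, s.lt⟩

@[simp]
lemma transpose_transpose (s : GridSeg) : s.transpose.transpose = s := by
  simp [transpose]

lemma transpose_pts (s : GridSeg) : s.transpose.pts = Prod.swap ⁻¹' s.pts := by
  unfold pts transpose
  cases s.horiz <;> rfl

lemma transpose_interior (s : GridSeg) : s.transpose.interior = Prod.swap ⁻¹' s.interior := by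
  unfold interior transpose
  cases s.horiz <;> rfl

lemma transpose_ends (s : GridSeg) : s.transpose.ends = Prod.swap ⁻¹' s.ends := by
  unfold ends transpose
  cases s.horiz <;> ext p <;> simp [Prod.ext_iff] <;> tauto

lemma latticePt_mem_transpose_pts : latticePt m n ∈ s.transpose.pts ↔ latticePt n m ∈ s.pts := by
  rw [transpose_pts]
  rfl

lemma latticePt_mem_transpose_ends :
    latticePt m n ∈ s.transpose.ends ↔ latticePt n m ∈ s.ends := by
  rw [transpose_ends]
  rfl

lemma disjoint_interior_transpose (h : Disjoint s.interior t.interior) :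
    Disjoint s.transpose.interior t.transpose.interior := by
  rw [transpose_interior, transpose_interior]
  exact h.preimage _

def double (s : GridSeg) : GridSeg :=
  ⟨s.horiz, 2 * s.coord, 2 * s.lo, 2 * s.hi, by have := s.lt; omega⟩

lemma double_pts (s : GridSeg) : s.double.pts = (fun p => (p.1 / 2, p.2 / 2)) ⁻¹' s.pts := by
  unfold pts double
  cases s.horiz <;> ext p <;> simp only [Set.mem_preimage] <;> push_cast <;>
    constructor <;> rintro ⟨h1, h2, h3⟩ <;> exact ⟨by linarith, by linarith, by linarith⟩

lemma double_interior (s : GridSeg) :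
    s.double.interior = (fun p => (p.1 / 2, p.2 / 2)) ⁻¹' s.interior := by
  unfold interior double
  cases s.horiz <;> ext p <;> simp only [Set.mem_preimage] <;> push_cast <;>
    constructor <;> rintro ⟨h1, h2, h3⟩ <;> exact ⟨by linarith, by linarith, by linarith⟩

lemma double_ends (s : GridSeg) : s.double.ends = (fun p => (p.1 / 2, p.2 / 2)) ⁻¹' s.ends := by
  unfold ends double
  cases s.horiz <;> ext ⟨x, y⟩ <;>
    simp only [Bool.false_eq_true, if_true, if_false, Set.mem_preimage, Set.mem_insert_iff,
      Set.mem_singleton_iff, Prod.ext_iff] <;>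
    push_cast <;> constructor <;> rintro (⟨h1, h2⟩ | ⟨h1, h2⟩) <;>
    first
    | exact .inl ⟨by linarith, by linarith⟩
    | exact .inr ⟨by linarith, by linarith⟩

lemma latticePt_two_mul_mem_double_pts :
    latticePt (2 * m) (2 * n) ∈ s.double.pts ↔ latticePt m n ∈ s.pts := by
  simp only [latticePt_mem_pts, double]
  split_ifs <;> omega

lemma latticePt_two_mul_mem_double_ends :
    latticePt (2 * m) (2 * n) ∈ s.double.ends ↔ latticePt m n ∈ s.ends := by
  simp only [latticePt_mem_ends, double]
  split_ifs <;> omega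

lemma latticePt_mem_double_pts_of_vertical (hr : r.horiz = false) (hlo : 2 * n - 1 ≤ r.lo)
    (hhi : r.hi ≤ 2 * n + 1) (hp : p ∈ r.pts) (hs : p ∈ s.double.pts) :
    latticePt r.coord (2 * n) ∈ s.double.pts := by
  have hloR : 2 * (n : ℝ) - 1 ≤ r.lo := by exact_mod_cast hlo
  have hhiR : (r.hi : ℝ) ≤ 2 * n + 1 := by exact_mod_cast hhi
  unfold pts at hp hs
  simp only [hr, Bool.false_eq_true, if_false] at hp
  obtain ⟨hpm, hpn, hpn'⟩ := hp
  rw [latticePt_mem_pts]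
  cases hh : s.horiz <;> simp only [double, hh, Bool.false_eq_true, if_true, if_false] at hs ⊢ <;>
    obtain ⟨h1, h2, h3⟩ := hs <;> push_cast at h1 h2 h3
  · have hmR : (r.coord : ℝ) = 2 * s.coord := hpm.symm.trans h1
    have hm : r.coord = 2 * s.coord := by exact_mod_cast hmR
    have hslo : 2 * s.lo < 2 * n + 2 := by
      exact_mod_cast (by linarith : (2 * s.lo : ℝ) < 2 * n + 2)
    have hshi : 2 * n - 2 < 2 * s.hi := by
      exact_mod_cast (by linarith : (2 * n - 2 : ℝ) < 2 * s.hi)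
    omega
  · have hc : 2 * s.coord < 2 * n + 2 := by
      exact_mod_cast (by linarith : (2 * s.coord : ℝ) < 2 * n + 2)
    have hc' : 2 * n - 2 < 2 * s.coord := by
      exact_mod_cast (by linarith : (2 * n - 2 : ℝ) < 2 * s.coord)
    have hslo : 2 * s.lo ≤ r.coord := by
      exact_mod_cast (by linarith : (2 * s.lo : ℝ) ≤ r.coord)
    have hshi : r.coord ≤ 2 * s.hi := by
      exact_mod_cast (by linarith : (r.coord : ℝ) ≤ 2 * s.hi)
    omega

def rayUp (m n : ℤ) : GridSeg := ⟨false, m, n, n + 1, by omega⟩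

def rayDown (m n : ℤ) : GridSeg := ⟨false, m, n - 1, n, by omega⟩

def rayRight (m n : ℤ) : GridSeg := ⟨true, n, m, m + 1, by omega⟩

def rayLeft (m n : ℤ) : GridSeg := ⟨true, n, m - 1, m, by omega⟩

def unitRays (m n : ℤ) : Set GridSeg := {rayUp m n, rayDown m n, rayRight m n, rayLeft m n}

lemma latticePt_mem_ends_of_mem_unitRays (hr : r ∈ unitRays m n) : latticePt m n ∈ r.ends := by
  rcases hr with rfl | rfl | rfl | rfl <;> simp [rayUp, rayDown, rayRight, rayLeft]

lemma transpose_mem_unitRays (hr : r ∈ unitRays m n) : r.transpose ∈ unitRays n m := by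
  rcases hr with rfl | rfl | rfl | rfl <;>
    simp [unitRays, transpose, rayUp, rayDown, rayRight, rayLeft]

lemma latticePt_mem_double_pts_of_mem_unitRays (hr : r ∈ unitRays (2 * m) (2 * n))
    (hp : p ∈ r.pts) (hs : p ∈ s.double.pts) : latticePt (2 * m) (2 * n) ∈ s.double.pts := by
  rcases hr with rfl | rfl | rfl | rfl
  · exact latticePt_mem_double_pts_of_vertical rfl (by simp [rayUp]) (by simp [rayUp]) hp hs
  · exact latticePt_mem_double_pts_of_vertical rfl (by simp [rayDown]) (by simp [rayDown]) hp hs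
  all_goals
    rw [← transpose_transpose s.double, latticePt_mem_transpose_pts]
    rw [← transpose_transpose s.double, transpose_pts, Set.mem_preimage] at hs
  · exact latticePt_mem_double_pts_of_vertical (r := rayUp _ _) (s := s.transpose) rfl
      (by simp [rayUp]) (by simp [rayUp]) hp hs
  · exact latticePt_mem_double_pts_of_vertical (r := rayDown _ _) (s := s.transpose) rfl
      (by simp [rayDown]) (by simp [rayDown]) hp hs

lemma exists_mem_unitRays_disjoint_of_horiz (hs : s.horiz = true) (hms : latticePt m n ∈ s.pts)
    (hend : latticePt m n ∈ s.ends ∨ latticePt m n ∈ t.ends) :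
    ∃ r ∈ unitRays m n, Disjoint r.interior s.interior ∧ Disjoint r.interior t.interior := by
  simp only [latticePt_mem_pts, latticePt_mem_ends, hs, if_true] at hms hend
  cases ht : t.horiz <;> simp only [ht, Bool.false_eq_true, if_true, if_false] at hend
  · by_cases htop : t.hi = n
    · exact ⟨rayUp m n, by simp [unitRays],
        disjoint_interior_of_horiz_ne (by simp [rayUp, hs]) (by simp only [rayUp]; omega),
        disjoint_interior_of_horiz_eq (by simp [rayUp, ht]) (by simp only [rayUp]; omega)⟩
    by_cases hbot : t.lo = n
    · exact ⟨rayDown m n, by simp [unitRays],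
        disjoint_interior_of_horiz_ne (by simp [rayDown, hs]) (by simp only [rayDown]; omega),
        disjoint_interior_of_horiz_eq (by simp [rayDown, ht]) (by simp only [rayDown]; omega)⟩
    obtain hleft | hright : m = s.lo ∨ m = s.hi := by omega
    · exact ⟨rayLeft m n, by simp [unitRays],
        disjoint_interior_of_horiz_eq (by simp [rayLeft, hs]) (by simp only [rayLeft]; omega),
        disjoint_interior_of_horiz_ne (by simp [rayLeft, ht]) (by simp only [rayLeft]; omega)⟩
    · exact ⟨rayRight m n, by simp [unitRays],
        disjoint_interior_of_horiz_eq (by simp [rayRight, hs]) (by simp only [rayRight]; omega),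
        disjoint_interior_of_horiz_ne (by simp [rayRight, ht]) (by simp only [rayRight]; omega)⟩
  · exact ⟨rayUp m n, by simp [unitRays],
      disjoint_interior_of_horiz_ne (by simp [rayUp, hs]) (by simp only [rayUp]; omega),
      disjoint_interior_of_horiz_ne (by simp [rayUp, ht]) (by simp only [rayUp]; omega)⟩

lemma exists_mem_unitRays_disjoint (hms : latticePt m n ∈ s.pts) (hmt : latticePt m n ∈ t.pts)
    (hend : latticePt m n ∈ s.ends ∨ latticePt m n ∈ t.ends) :
    ∃ r ∈ unitRays m n, Disjoint r.interior s.interior ∧ Disjoint r.interior t.interior := by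
  cases hs : s.horiz
  · cases ht : t.horiz
    · obtain ⟨r, hr, hrs, hrt⟩ := exists_mem_unitRays_disjoint_of_horiz (t := t.transpose)
        (by simp [transpose, hs]) (latticePt_mem_transpose_pts.2 hms)
        (latticePt_mem_transpose_ends.or latticePt_mem_transpose_ends |>.2 hend)
      exact ⟨r.transpose, transpose_mem_unitRays hr,
        by simpa using disjoint_interior_transpose hrs,
        by simpa using disjoint_interior_transpose hrt⟩
    · obtain ⟨r, hr, hrt, hrs⟩ := exists_mem_unitRays_disjoint_of_horiz ht hmt hend.symm
      exact ⟨r, hr, hrs, hrt⟩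
  · exact exists_mem_unitRays_disjoint_of_horiz hs hms hend

end GridSeg

open GridSeg

namespace SimpleGraph

variable {V : Type*} {G : SimpleGraph V}

lemma ncard_neighborSet_add_one_lt [Finite V] {n : ℕ} (hG : G.CliqueFree n) {v : V}
    (hv : G.IsClique (G.neighborSet v)) : (G.neighborSet v).ncard + 1 < n := by
  classical
  set t := (G.neighborSet v).toFinite.toFinset
  have ht : G.IsNClique ((G.neighborSet v).ncard + 1) (insert v t) :=
    (G.isNClique_iff.2 ⟨by simpa [t] using hv, (Set.ncard_eq_toFinset_card _ _).symm⟩).insert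
      (by simp)
  by_contra! h
  exact hG.mono h _ ht

lemma adj_of_common_neighbors_of_diamondFree (hD : IsEmpty (diamond ↪g G)) {a b v w : V}
    (hab : G.Adj a b) (hva : G.Adj v a) (hvb : G.Adj v b) (hwa : G.Adj w a) (hwb : G.Adj w b)
    (hvw : v ≠ w) : G.Adj v w := by
  by_contra hnvw
  refine hD.false ⟨⟨![a, b, v, w], fun i j hij => ?_⟩, fun {i j} => ?_⟩
  · fin_cases i <;> fin_cases j <;> simp_all [G.ne_of_adj, (G.ne_of_adj _).symm]
  · change G.Adj (![a, b, v, w] i) (![a, b, v, w] j) ↔ diamond.Adj i j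
    fin_cases i <;> fin_cases j <;> simp_all [diamond, G.adj_comm]

end SimpleGraph

namespace IsB0Rep

section

variable {V : Type*} {G : SimpleGraph V} {f : V → GridSeg}

lemma map (hf : IsB0Rep G f) {T : GridSeg → GridSeg} {φ : ℝ × ℝ → ℝ × ℝ}
    (hφ : Function.Surjective φ) (hpts : ∀ s, (T s).pts = φ ⁻¹' s.pts)
    (hint : ∀ s, (T s).interior = φ ⁻¹' s.interior) (hends : ∀ s, (T s).ends = φ ⁻¹' s.ends) :
    IsB0Rep G (T ∘ f) := by
  have touch_iff (s t : GridSeg) : (T s).Touch (T t) ↔ s.Touch t := by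
    simp only [Touch, hpts, hends, Set.mem_preimage]
    exact ⟨fun ⟨p, hp⟩ => ⟨φ p, hp⟩,
      fun ⟨p, hp⟩ => (hφ p).elim fun p' hp' => ⟨p', hp' ▸ hp⟩⟩
  refine ⟨fun v w hvw => ?_, fun v w hvw => (hf.2 v w hvw).trans (touch_iff _ _).symm⟩
  simpa only [Function.comp, hint] using (hf.1 v w hvw).preimage φ

lemma comp_transpose (hf : IsB0Rep G f) : IsB0Rep G (transpose ∘ f) :=
  hf.map Prod.swap_surjective transpose_pts transpose_interior transpose_ends

lemma comp_double (hf : IsB0Rep G f) : IsB0Rep G (double ∘ f) :=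
  hf.map (fun p => ⟨(2 * p.1, 2 * p.2), by simp⟩) double_pts double_interior double_ends

end

variable {V : Type*} {G : SimpleGraph V} {v : V} {f : ({v}ᶜ : Set V) → GridSeg}

theorem contactB0VPG_of_extend (hf : IsB0Rep (G.induce {v}ᶜ) f) (r : GridSeg)
    (hdisj : ∀ w, Disjoint r.interior (f w).interior)
    (htouch : ∀ w : ({v}ᶜ : Set V), G.Adj v w ↔ r.Touch (f w)) : ContactB0VPG G := by
  classical
  refine ⟨fun w => if h : w = v then r else f ⟨w, h⟩, fun x y hxy => ?_, fun x y hxy => ?_⟩ <;>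
    by_cases hx : x = v <;> by_cases hy : y = v
  · exact absurd (hx.trans hy.symm) hxy
  · simpa [hx, hy] using hdisj ⟨y, hy⟩
  · simpa [hx, hy] using (hdisj ⟨x, hx⟩).symm
  · simpa [hx, hy] using hf.1 ⟨x, hx⟩ ⟨y, hy⟩ (by simpa [Subtype.ext_iff])
  · exact absurd (hx.trans hy.symm) hxy
  · simpa [hx, hy] using htouch ⟨y, hy⟩
  · simpa [hx, hy, G.adj_comm x, touch_comm] using htouch ⟨x, hx⟩
  · simpa [hx, hy] using hf.2 ⟨x, hx⟩ ⟨y, hy⟩ (by simpa [Subtype.ext_iff])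

theorem contactB0VPG_of_attach (hf : IsB0Rep (G.induce {v}ᶜ) f) {r : GridSeg} {q : ℝ × ℝ}
    (hq : q ∈ r.ends) (hray : ∀ w, ∀ p ∈ r.pts, p ∈ (f w).pts → q ∈ (f w).pts)
    (hnbr : ∀ w : ({v}ᶜ : Set V), q ∈ (f w).pts ↔ G.Adj v w)
    (hdisj : ∀ w : ({v}ᶜ : Set V), G.Adj v w → Disjoint r.interior (f w).interior) :
    ContactB0VPG G := by
  refine hf.contactB0VPG_of_extend r (fun w => ?_) fun w =>
    ⟨fun h => ⟨q, ends_subset_pts r hq, (hnbr w).2 h, .inl hq⟩,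
      fun ⟨p, hr, hw, _⟩ => (hnbr w).1 (hray w p hr hw)⟩
  by_cases h : G.Adj v w
  · exact hdisj w h
  · refine Set.disjoint_left.2 fun p hr hw => h ((hnbr w).1 ?_)
    exact hray w p (interior_subset_pts r hr) (interior_subset_pts _ hw)

theorem contactB0VPG_of_neighborSet_eq_empty [Finite V] (hf : IsB0Rep (G.induce {v}ᶜ) f)
    (hN : G.neighborSet v = ∅) : ContactB0VPG G := by
  obtain ⟨r, hr⟩ := exists_disjoint_pts f
  refine hf.contactB0VPG_of_extend r
    (fun w => (hr w).mono (interior_subset_pts r) (interior_subset_pts _)) fun w => ?_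
  have hvw : ¬ G.Adj v w := by simp [← SimpleGraph.mem_neighborSet, hN]
  simp only [hvw, false_iff]
  rintro ⟨p, hr', hw, -⟩
  exact Set.disjoint_left.1 (hr w) hr' hw

theorem contactB0VPG_of_neighborSet_eq_singleton_of_horiz (hf : IsB0Rep (G.induce {v}ᶜ) f)
    {a : ({v}ᶜ : Set V)} (hN : G.neighborSet v = {(a : V)}) (ha : (f a).horiz = true) :
    ContactB0VPG G := by
  have hnbr (w : ({v}ᶜ : Set V)) : G.Adj v w ↔ w = a := by
    rw [← SimpleGraph.mem_neighborSet, hN, Set.mem_singleton_iff, Subtype.ext_iff]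
  set s := f a
  have hq : latticePt (2 * s.lo + 1) (2 * s.coord) ∈ s.double.interior := by
    have := s.lt
    refine mem_interior_of_mem_pts_of_notMem_ends ?_ ?_ <;> simp [double, ha] <;> omega
  refine hf.comp_double.contactB0VPG_of_attach (r := rayUp (2 * s.lo + 1) (2 * s.coord))
    (by simp [rayUp])
    (fun w p hr hw => latticePt_mem_double_pts_of_vertical (n := s.coord) rfl (by simp [rayUp])
      (by simp [rayUp]) hr hw) (fun w => ?_) (fun w hw => ?_)
  · rw [hnbr]
    refine ⟨fun hqw => ?_, fun h => h ▸ interior_subset_pts _ hq⟩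
    by_contra hwa
    refine Set.disjoint_left.1 (hf.comp_double.1 w a hwa) ?_ hq
    refine mem_interior_of_mem_pts_of_notMem_ends hqw ?_
    simp only [Function.comp, latticePt_mem_ends, double]
    split_ifs <;> omega
  · rw [(hnbr w).1 hw]
    exact disjoint_interior_of_horiz_ne (t := s.double) (by simp [rayUp, double, ha])
      (by simp [rayUp, double])

theorem contactB0VPG_of_neighborSet_eq_singleton (hf : IsB0Rep (G.induce {v}ᶜ) f) {a : V}
    (hN : G.neighborSet v = {a}) : ContactB0VPG G := by
  have ha : a ∈ ({v}ᶜ : Set V) := (G.ne_of_adj (show a ∈ G.neighborSet v from hN ▸ rfl)).symm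
  cases h : (f ⟨a, ha⟩).horiz
  · exact hf.comp_transpose.contactB0VPG_of_neighborSet_eq_singleton_of_horiz (a := ⟨a, ha⟩) hN
      (by simp [GridSeg.transpose, h])
  · exact hf.contactB0VPG_of_neighborSet_eq_singleton_of_horiz (a := ⟨a, ha⟩) hN h

theorem contactB0VPG_of_neighborSet_eq_pair (hf : IsB0Rep (G.induce {v}ᶜ) f)
    (hD : IsEmpty (diamond ↪g G)) {a b : V} (hN : G.neighborSet v = {a, b}) (hab : G.Adj a b) :
    ContactB0VPG G := by
  have hnbr (w : V) : G.Adj v w ↔ w = a ∨ w = b := by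
    rw [← SimpleGraph.mem_neighborSet, hN, Set.mem_insert_iff, Set.mem_singleton_iff]
  have hva := (hnbr a).2 (.inl rfl)
  have hvb := (hnbr b).2 (.inr rfl)
  set a' : ({v}ᶜ : Set V) := ⟨a, (G.ne_of_adj hva).symm⟩
  set b' : ({v}ᶜ : Set V) := ⟨b, (G.ne_of_adj hvb).symm⟩
  have hw_eq (w : ({v}ᶜ : Set V)) (hw : G.Adj v w) : w = a' ∨ w = b' := by
    simpa [Subtype.ext_iff] using (hnbr w).1 hw
  obtain ⟨p, hpa, hpb, hend⟩ := (hf.2 a' b' fun h => G.ne_of_adj hab congr($h.1)).1 hab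
  obtain ⟨m, n, rfl⟩ :=
    hend.elim exists_latticePt_eq_of_mem_ends exists_latticePt_eq_of_mem_ends
  have hd := hf.comp_double
  have hqa := latticePt_two_mul_mem_double_pts.2 hpa
  have hqb := latticePt_two_mul_mem_double_pts.2 hpb
  obtain ⟨r, hr, hra, hrb⟩ := exists_mem_unitRays_disjoint hqa hqb
    (latticePt_two_mul_mem_double_ends.or latticePt_two_mul_mem_double_ends |>.2 hend)
  refine hd.contactB0VPG_of_attach (latticePt_mem_ends_of_mem_unitRays hr)
    (fun w p hp hw => latticePt_mem_double_pts_of_mem_unitRays hr hp hw)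
    (fun w => ⟨fun hqw => ?_, fun hw => ?_⟩) (fun w hw => ?_)
  · by_cases hwa : w = a'
    · exact hwa ▸ hva
    by_cases hwb : w = b'
    · exact hwb ▸ hvb
    have hadj (u : ({v}ᶜ : Set V)) (hwu : w ≠ u) (hu : _ ∈ (f u).double.pts) : G.Adj w u :=
      (hd.2 w u hwu).2 (touch_of_mem_pts (hd.1 w u hwu) hqw hu)
    exact G.adj_of_common_neighbors_of_diamondFree hD hab hva hvb (hadj a' hwa hqa)
      (hadj b' hwb hqb) (Ne.symm w.2)
  · rcases hw_eq w hw with rfl | rfl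
    exacts [hqa, hqb]
  · rcases hw_eq w hw with rfl | rfl
    exacts [hra, hrb]

end IsB0Rep

/-- in a `{K₅, K₄ − e}`-free graph which is minimally non contact B₀-VPG
(it is not contact B₀-VPG but every proper induced subgraph is), every simplicial vertex
has degree exactly three. -/
theorem minimal_simplicial_degree_three {V : Type*} [Finite V] (G : SimpleGraph V)
    (hK5 : IsEmpty ((⊤ : SimpleGraph (Fin 5)) ↪g G))
    (hdiamond : IsEmpty (diamond ↪g G))
    (hnot : ¬ ContactB0VPG G)
    (hmin : ∀ s : Set V, s ≠ Set.univ → ContactB0VPG (G.induce s))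
    (v : V) (hsimp : ∀ a ∈ G.neighborSet v, ∀ b ∈ G.neighborSet v, a ≠ b → G.Adj a b) :
    (G.neighborSet v).ncard = 3 := by
  have hG : G.CliqueFree 5 := SimpleGraph.cliqueFree_iff.2 ⟨fun c => hK5.false c.topEmbedding⟩
  have hle := SimpleGraph.ncard_neighborSet_add_one_lt hG hsimp
  obtain ⟨f, hf⟩ := hmin {v}ᶜ (by simp)
  by_contra hne
  obtain h0 | h1 | h2 : (G.neighborSet v).ncard = 0 ∨ (G.neighborSet v).ncard = 1 ∨
      (G.neighborSet v).ncard = 2 := by omega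
  · rw [Set.ncard_eq_zero (Set.toFinite _)] at h0
    exact hnot (hf.contactB0VPG_of_neighborSet_eq_empty h0)
  · obtain ⟨a, ha⟩ := Set.ncard_eq_one.1 h1
    exact hnot (hf.contactB0VPG_of_neighborSet_eq_singleton ha)
  · obtain ⟨a, b, hab, hN⟩ := Set.ncard_eq_two.1 h2
    exact hnot (hf.contactB0VPG_of_neighborSet_eq_pair hdiamond hN
      (hsimp a (by simp [hN]) b (by simp [hN]) hab))
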